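/- arXiv:2310.11587 — 2 statements merged into one kernel-verified Lean document; each statement's English description precedes it below -/
import Mathlib

section
/- Suppose the M-grading of R = MvPolynomial (Fin N) ℂ is pointed, let I, J ⊆ R be M-graded ideals, and let m ∈ M. Then D_0^m(I ∩ J) = D_0^m(I) + D_0^m(J): an M-homogeneous polynomial q of degree m satisfies λ_q(f) = 0 for all f ∈ I ∩ J if and only if q = p_1 + p_2 for some M-homogeneous p_1, p_2 of degree m with λ_{p_1} vanishing on I and λ_{p_2} vanishing on J. -/
open MvPolynomial

/-- The Macaulay pairing `λ_p(f) = ∑_α coeff(α,p) * coeff(α,f)`, as a linear functional. -/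
noncomputable def lam {N : ℕ} (p : MvPolynomial (Fin N) ℂ) :
    MvPolynomial (Fin N) ℂ →ₗ[ℂ] ℂ where
  toFun f := ∑ α ∈ p.support, coeff α p * coeff α f
  map_add' f g := by simp [mul_add, Finset.sum_add_distrib]
  map_smul' c f := by
    simp [MvPolynomial.coeff_smul, Finset.mul_sum, mul_left_comm]

/-- An ideal is `M`-graded if it is generated by a set of `M`-homogeneous polynomials. -/
def IsMGraded {N : ℕ} {M : Type*} [AddCommGroup M] (w : Fin N → M)
    (I : Ideal (MvPolynomial (Fin N) ℂ)) : Prop :=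
  ∃ S : Set (MvPolynomial (Fin N) ℂ),
    (∀ s ∈ S, ∃ m : M, s.IsWeightedHomogeneous w m) ∧ I = Ideal.span S

/-!
On the space `V` of weighted homogeneous polynomials of degree `m`, which is finite-dimensional
because the grading is pointed, the symmetric pairing `lam` is nondegenerate: the monomials are
orthonormal. For `p ∈ V`, `lam p` only sees the degree-`m` component of its argument, and a graded
ideal contains the homogeneous components of its elements, so `lam p` vanishes on a graded ideal
`K` iff `p` is orthogonal to `K ∩ V`. The theorem is then `(U ⊓ U')ᗮ = Uᗮ ⊔ U'ᗮ` in `V`, which the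
nondegenerate form transports from `ann (U ⊓ U') = ann U ⊔ ann U'` in the dual space.
-/

namespace LinearMap.BilinForm

theorem orthogonal_eq_comap_dualAnnihilator {R M : Type*} [CommSemiring R] [AddCommMonoid M]
    [Module R M] (B : LinearMap.BilinForm R M) (U : Submodule R M) :
    B.orthogonal U = U.dualAnnihilator.comap B.flip := by
  ext v
  simp [Submodule.mem_dualAnnihilator]

theorem orthogonal_inf {K V : Type*} [Field K] [AddCommGroup V] [Module K V]
    [FiniteDimensional K V] {B : LinearMap.BilinForm K V} (hB : B.Nondegenerate)
    (U U' : Submodule K V) :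
    B.orthogonal (U ⊓ U') = B.orthogonal U ⊔ B.orthogonal U' := by
  have hflip : B.flip = (B.flip.toDual hB.flip : V →ₗ[K] Module.Dual K V) := rfl
  simp only [orthogonal_eq_comap_dualAnnihilator, Subspace.dualAnnihilator_inf_eq]
  rw [hflip]
  simp only [Submodule.comap_equiv_eq_map_symm, Submodule.map_sup]

end LinearMap.BilinForm

theorem MvPolynomial.finite_weightedHomogeneousSubmodule {R σ M : Type*} [CommSemiring R]
    [AddCommMonoid M] {w : σ → M} {m : M} (hm : {α : σ →₀ ℕ | Finsupp.weight w α = m}.Finite) :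
    Module.Finite R (weightedHomogeneousSubmodule R w m) := by
  rw [weightedHomogeneousSubmodule_eq_finsupp_supported]
  have := hm.to_subtype
  exact Module.Finite.of_basis (basisRestrictSupport R _)

theorem IsMGraded.weightedHomogeneousComponent_mem {N : ℕ} {M : Type*} [AddCommGroup M]
    {w : Fin N → M} {I : Ideal (MvPolynomial (Fin N) ℂ)} (hI : IsMGraded w I)
    {f : MvPolynomial (Fin N) ℂ} (hf : f ∈ I) (m : M) :
    weightedHomogeneousComponent w m f ∈ I := by
  classical
  obtain ⟨S, hS, rfl⟩ := hI
  let _ := weightedGradedAlgebra ℂ w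
  have hspan := Ideal.homogeneous_span (weightedHomogeneousSubmodule ℂ w) S hS
  rw [← decompose'_apply]
  exact hspan m hf

section Macaulay

variable {N : ℕ}

theorem lam_apply (p f : MvPolynomial (Fin N) ℂ) :
    lam p f = ∑ α ∈ p.support, coeff α p * coeff α f := rfl

theorem lam_eq_sum_of_support_subset {p : MvPolynomial (Fin N) ℂ} {s : Finset (Fin N →₀ ℕ)}
    (h : p.support ⊆ s) (f : MvPolynomial (Fin N) ℂ) :
    lam p f = ∑ α ∈ s, coeff α p * coeff α f :=
  Finset.sum_subset h fun α _ hα => by rw [notMem_support_iff.mp hα, zero_mul]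

theorem lam_comm (p f : MvPolynomial (Fin N) ℂ) : lam p f = lam f p := by
  classical
  rw [lam_eq_sum_of_support_subset Finset.subset_union_left,
    lam_eq_sum_of_support_subset (Finset.subset_union_right (s₁ := p.support))]
  exact Finset.sum_congr rfl fun _ _ => mul_comm _ _

noncomputable def lamBilin : MvPolynomial (Fin N) ℂ →ₗ[ℂ] MvPolynomial (Fin N) ℂ →ₗ[ℂ] ℂ :=
  LinearMap.mk₂ ℂ (fun p f => lam p f)
    (fun p q f => by simp only [lam_comm _ f, map_add])
    (fun c p f => by simp only [lam_comm _ f, map_smul, smul_eq_mul])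
    (fun p f g => map_add (lam p) f g)
    (fun c p f => map_smul (lam p) c f)

theorem lam_monomial_one_right (p : MvPolynomial (Fin N) ℂ) (α : Fin N →₀ ℕ) :
    lam p (monomial α 1) = coeff α p := by
  simp [lam_comm p, lam_apply, support_monomial]

variable {M : Type*} [AddCommMonoid M] (w : Fin N → M) (m : M)

theorem lam_weightedHomogeneousComponent {p : MvPolynomial (Fin N) ℂ}
    (hp : p.IsWeightedHomogeneous w m) (f : MvPolynomial (Fin N) ℂ) :
    lam p (weightedHomogeneousComponent w m f) = lam p f := by
  classical
  refine Finset.sum_congr rfl fun α hα => ?_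
  rw [coeff_weightedHomogeneousComponent, if_pos (hp (mem_support_iff.mp hα))]

noncomputable def lamForm : LinearMap.BilinForm ℂ (weightedHomogeneousSubmodule ℂ w m) :=
  lamBilin.compl₁₂ (weightedHomogeneousSubmodule ℂ w m).subtype
    (weightedHomogeneousSubmodule ℂ w m).subtype

theorem lamForm_apply (p f : weightedHomogeneousSubmodule ℂ w m) :
    lamForm w m p f = lam (p : MvPolynomial (Fin N) ℂ) f := rfl

theorem lamForm_nondegenerate : (lamForm w m).Nondegenerate := by
  have hrefl : (lamForm w m).IsRefl := fun p f h => by rwa [lamForm_apply, lam_comm]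
  refine hrefl.nondegenerate_iff_separatingLeft.mpr fun p hp =>
    Subtype.ext <| MvPolynomial.ext _ _ fun α => ?_
  by_cases hα : Finsupp.weight w α = m
  · simpa [lamForm_apply, lam_monomial_one_right] using
      hp ⟨monomial α 1, isWeightedHomogeneous_monomial w α 1 hα⟩
  · exact by_contra fun h => hα (p.2 h)

theorem mem_orthogonal_lamForm_iff {K : Ideal (MvPolynomial (Fin N) ℂ)}
    (hK : ∀ f ∈ K, weightedHomogeneousComponent w m f ∈ K)
    (p : weightedHomogeneousSubmodule ℂ w m) :
    p ∈ (lamForm w m).orthogonal ((K.restrictScalars ℂ).comap (Submodule.subtype _)) ↔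
      ∀ f ∈ K, lam (p : MvPolynomial (Fin N) ℂ) f = 0 := by
  refine ⟨fun hp f hf => ?_, fun hp f hf => ?_⟩
  · rw [← lam_weightedHomogeneousComponent w m p.2, lam_comm]
    exact hp ⟨_, weightedHomogeneousComponent_mem w f m⟩ (hK f hf)
  · rw [lamForm_apply, lam_comm]
    exact hp f hf

end Macaulay

/-- **Cor. 4.2(3)**: for a pointed `M`-grading, `M`-graded ideals `I, J`, and `m ∈ M`,
`D_0^m(I ∩ J) = D_0^m(I) + D_0^m(J)`: an `M`-homogeneous `q` of degree `m` satisfies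
`λ_q(f) = 0` for all `f ∈ I ∩ J` iff `q = p₁ + p₂` for some `M`-homogeneous `p₁, p₂` of
degree `m` with `λ_{p₁}` vanishing on `I` and `λ_{p₂}` vanishing on `J`. -/
theorem dualSpace_inter_eq_sum {N : ℕ} {M : Type*} [AddCommGroup M] (w : Fin N → M)
    (hpointed : ∀ m : M, {α : Fin N →₀ ℕ | Finsupp.weight w α = m}.Finite)
    (I J : Ideal (MvPolynomial (Fin N) ℂ)) (hI : IsMGraded w I) (hJ : IsMGraded w J)
    (m : M) (q : MvPolynomial (Fin N) ℂ) (hq : q.IsWeightedHomogeneous w m) :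
    (∀ f ∈ I ⊓ J, lam q f = 0) ↔
      ∃ p₁ p₂ : MvPolynomial (Fin N) ℂ,
        p₁.IsWeightedHomogeneous w m ∧ p₂.IsWeightedHomogeneous w m ∧
        (∀ f ∈ I, lam p₁ f = 0) ∧ (∀ f ∈ J, lam p₂ f = 0) ∧ q = p₁ + p₂ := by
  have := finite_weightedHomogeneousSubmodule (R := ℂ) (hpointed m)
  have hIm f (hf : f ∈ I) := hI.weightedHomogeneousComponent_mem hf m
  have hJm f (hf : f ∈ J) := hJ.weightedHomogeneousComponent_mem hf m
  rw [← mem_orthogonal_lamForm_iff w m (K := I ⊓ J) (p := ⟨q, hq⟩)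
      fun f hf => ⟨hIm f hf.1, hJm f hf.2⟩,
    Submodule.restrictScalars_inf, Submodule.comap_inf,
    LinearMap.BilinForm.orthogonal_inf (lamForm_nondegenerate w m), Submodule.mem_sup]
  constructor
  · rintro ⟨p₁, hp₁, p₂, hp₂, hsum⟩
    exact ⟨p₁, p₂, p₁.2, p₂.2, (mem_orthogonal_lamForm_iff w m hIm p₁).mp hp₁,
      (mem_orthogonal_lamForm_iff w m hJm p₂).mp hp₂, congrArg Subtype.val hsum.symm⟩
  · rintro ⟨p₁, p₂, hp₁, hp₂, h₁, h₂, rfl⟩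
    exact ⟨⟨p₁, hp₁⟩, (mem_orthogonal_lamForm_iff w m hIm _).mpr h₁,
      ⟨p₂, hp₂⟩, (mem_orthogonal_lamForm_iff w m hJm _).mpr h₂, rfl⟩
end

section
/- Let g ∈ R = MvPolynomial (Fin N) ℂ be M-homogeneous of degree d, and let p ∈ R be M-homogeneous of degree m'. Then there exists a unique polynomial q ∈ R such that λ_q(f) = λ_p(g·f) for all f ∈ R, and this q is M-homogeneous of degree m' − d. In particular, the operator Φ_g(∂)(f) = ∂(g·f) maps the Macaulay dual space D_0 to itself and maps the degree-m' graded piece D_0^{m'} into D_0^{m'−d}. -/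
open MvPolynomial

/-!
Since `λ_q(x^α) = coeff α q`, a polynomial `q` with `λ_q = λ_p(g · _)` must have coefficient
`λ_p(g · x^α)` at `α`; this gives uniqueness, and these numbers vanish unless `α ≤ β` for some `β`
in the support of `p`, so they are the coefficients of a polynomial. For homogeneity, `λ_p` kills
every polynomial homogeneous of a degree other than `m'`, and `g · x^α` is homogeneous of degree
`d + w(α)`.
-/

section

variable {N : ℕ}

lemma lam_monomial_one (q : MvPolynomial (Fin N) ℂ) (α : Fin N →₀ ℕ) :
    lam q (monomial α 1) = coeff α q := by
  simp only [lam, LinearMap.coe_mk, AddHom.coe_mk, coeff_monomial]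
  rw [Finset.sum_eq_single α (fun β _ hβ => by simp [Ne.symm hβ])
    (fun h => by simp [notMem_support_iff.mp h])]
  simp

lemma lam_injective : Function.Injective (lam (N := N)) := fun p q h =>
  MvPolynomial.ext p q fun α => by
    rw [← lam_monomial_one, ← lam_monomial_one, h]

lemma exists_mem_support_le_of_lam_mul_monomial_ne_zero {p g : MvPolynomial (Fin N) ℂ}
    {α : Fin N →₀ ℕ} (h : lam p (g * monomial α 1) ≠ 0) : ∃ β ∈ p.support, α ≤ β := by
  by_contra! hα
  refine h (Finset.sum_eq_zero fun β hβ => ?_)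
  rw [coeff_mul_monomial', if_neg (hα β hβ), mul_zero]

/-- The polynomial representing `Φ_g(λ_p)`. -/
noncomputable def phi (g p : MvPolynomial (Fin N) ℂ) : MvPolynomial (Fin N) ℂ :=
  .ofCoeff <| Finsupp.onFinset (p.support.biUnion Finset.Iic)
    (fun α => lam p (g * monomial α 1)) fun α h => by
      obtain ⟨β, hβ, hαβ⟩ := exists_mem_support_le_of_lam_mul_monomial_ne_zero h
      exact Finset.mem_biUnion.mpr ⟨β, hβ, Finset.mem_Iic.mpr hαβ⟩

lemma coeff_phi (g p : MvPolynomial (Fin N) ℂ) (α : Fin N →₀ ℕ) :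
    coeff α (phi g p) = lam p (g * monomial α 1) :=
  rfl

lemma lam_phi (g p f : MvPolynomial (Fin N) ℂ) : lam (phi g p) f = lam p (g * f) := by
  suffices lam (phi g p) = lam p ∘ₗ LinearMap.mulLeft ℂ g from LinearMap.congr_fun this f
  refine linearMap_ext fun α => LinearMap.ext_ring ?_
  simp [lam_monomial_one, coeff_phi]

lemma lam_eq_zero_of_isWeightedHomogeneous_of_ne {M : Type*} [AddCommMonoid M]
    {w : Fin N → M} {p f : MvPolynomial (Fin N) ℂ} {m e : M}
    (hp : p.IsWeightedHomogeneous w m) (hf : f.IsWeightedHomogeneous w e) (hme : m ≠ e) :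
    lam p f = 0 :=
  Finset.sum_eq_zero fun β hβ => by
    rw [(hf.coeff_eq_zero β fun h => hme ((hp (mem_support_iff.mp hβ)).symm.trans h)), mul_zero]

lemma isWeightedHomogeneous_phi {M : Type*} [AddCommGroup M] {w : Fin N → M}
    {g p : MvPolynomial (Fin N) ℂ} {d m : M}
    (hg : g.IsWeightedHomogeneous w d) (hp : p.IsWeightedHomogeneous w m) :
    (phi g p).IsWeightedHomogeneous w (m - d) := by
  intro α hα
  rw [coeff_phi] at hα
  by_contra hne
  refine hα (lam_eq_zero_of_isWeightedHomogeneous_of_ne hp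
    (hg.mul (isWeightedHomogeneous_monomial w α 1 rfl)) fun h => hne ?_)
  rw [h, add_sub_cancel_left]

end

/-- `Φ_g` is well defined on `D_0` and maps the graded piece `D_0^{m'}` into
`D_0^{m'-d}`: for `g` `M`-homogeneous of degree `d` and `p` `M`-homogeneous of degree
`m'`, there is a unique polynomial `q` with `λ_q(f) = λ_p(g·f)` for all `f`, and this `q`
is `M`-homogeneous of degree `m' - d`. -/
theorem phi_maps_graded_pieces {N : ℕ} {M : Type*} [AddCommGroup M] (w : Fin N → M)
    (g : MvPolynomial (Fin N) ℂ) (d : M) (hg : g.IsWeightedHomogeneous w d)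
    (p : MvPolynomial (Fin N) ℂ) (m' : M) (hp : p.IsWeightedHomogeneous w m') :
    ∃ q : MvPolynomial (Fin N) ℂ,
      (∀ f : MvPolynomial (Fin N) ℂ, lam q f = lam p (g * f)) ∧
      q.IsWeightedHomogeneous w (m' - d) ∧
      ∀ q' : MvPolynomial (Fin N) ℂ,
        (∀ f : MvPolynomial (Fin N) ℂ, lam q' f = lam p (g * f)) → q' = q :=
  ⟨phi g p, lam_phi g p, isWeightedHomogeneous_phi hg hp, fun _ hq' =>
    lam_injective (LinearMap.ext fun f => (hq' f).trans (lam_phi g p f).symm)⟩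
end
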